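/- arXiv:1501.02496 — 5 statements merged into one kernel-verified Lean document; each statement's English description precedes it below -/
import Mathlib

section
/- Let Γ be a simplicial complex with a sequence of facets F_1, ..., F_i forming a well ordered facet cover. Then under the total order F_1 < F_2 < ... < F_i < (all other facets of Γ in any fixed order), the set {F_1, ..., F_i} is a facet (maximal rooted face) of the Lyubeznik simplicial complex Λ associated to the facet ideal of Γ and this order. -/
open Classical

variable {α : Type*} [DecidableEq α]

/-- The vertex set of a simplicial complex given by its finset of facets. -/
def vertexSet (Δ : Finset (Finset α)) : Finset α := Δ.sup id

/-- `D` is a facet cover of the complex with facet set `Δ` and vertex set `V`: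
every vertex belongs to some facet of `D`. -/
def IsFacetCover (V : Finset α) (Δ D : Finset (Finset α)) : Prop :=
  D ⊆ Δ ∧ ∀ v ∈ V, ∃ F ∈ D, v ∈ F

/-- A minimal facet cover: no proper subset is a facet cover. -/
def IsMinimalFacetCover (V : Finset α) (Δ D : Finset (Finset α)) : Prop :=
  IsFacetCover V Δ D ∧ ∀ D' ⊂ D, ¬IsFacetCover V Δ D'

/-- Union of a list of finsets. -/
def listUnion (L : List (Finset α)) : Finset α := L.foldr (· ∪ ·) ∅

/-- A sequence of facets `L = [F_1, ..., F_k]` is a well ordered facet cover of the complex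
with facet set `Δ` and vertex set `V`: it is a minimal facet cover and for every facet
`H ∉ {F_1, ..., F_k}` there is `i ≤ k - 1` with `F_i ⊆ H ∪ F_{i+1} ∪ ⋯ ∪ F_k`. -/
def IsWellOrderedFacetCover (V : Finset α) (Δ : Finset (Finset α))
    (L : List (Finset α)) : Prop :=
  L.Nodup ∧ (∀ F ∈ L, F ∈ Δ) ∧ IsMinimalFacetCover V Δ L.toFinset ∧
    ∀ H ∈ Δ, H ∉ L → ∃ i : ℕ, ∃ h : i + 1 < L.length,
      L.get ⟨i, Nat.lt_of_succ_lt h⟩ ⊆ H ∪ listUnion (L.drop (i + 1))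

/-- `S` is a rooted set of facets of `Γ` with respect to the order given by the weight
function `w`: for every nonempty `T ⊆ S`, `min(T)` (the `w`-smallest facet of `Γ`
contained in the union of the facets of `T`) belongs to `T`. -/
def Rooted (w : Finset α → ℕ) (Γ S : Finset (Finset α)) : Prop :=
  ∀ T ⊆ S, T.Nonempty → ∃ G ∈ T, ∀ H ∈ Γ, H ⊆ T.sup id → w G ≤ w H

/-!
Every subset `T` of a minimal facet cover `D` is rooted at its lightest member `G`: a lighter
facet `H` inside `⋃ T` must lie in `D` (facets outside `D` are heavier than all of `D`) but not
in `T`, and then `D \ {H}` would still be a cover. Conversely, for a facet `H` outside the cover,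
the well ordered condition gives `F_i ⊆ H ∪ F_{i+1} ∪ ⋯ ∪ F_k`, and `F_i` is strictly lighter
than every member of `{H, F_{i+1}, …, F_k}`, so this subset of `{H} ∪ D` has no root.
-/

lemma listUnion_eq_sup (M : List (Finset α)) : listUnion M = M.toFinset.sup id := by
  induction M with
  | nil => rfl
  | cons a M ih =>
    change a ∪ listUnion M = _
    rw [ih, List.toFinset_cons, Finset.sup_insert, id, Finset.sup_eq_union]

section FacetCover

variable {V : Finset α} {Γ D T : Finset (Finset α)} {H : Finset α}

lemma IsFacetCover.erase (hD : IsFacetCover V Γ D) (hT : T ⊆ D) (hHT : H ∉ T)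
    (hH : H ⊆ T.sup id) : IsFacetCover V Γ (D.erase H) := by
  refine ⟨(Finset.erase_subset H D).trans hD.1, fun v hv => ?_⟩
  obtain ⟨F, hFD, hvF⟩ := hD.2 v hv
  by_cases hFH : F = H
  · subst hFH
    obtain ⟨G, hGT, hvG⟩ := Finset.mem_sup.mp (hH hvF)
    exact ⟨G, Finset.mem_erase.mpr ⟨ne_of_mem_of_not_mem hGT hHT, hT hGT⟩, hvG⟩
  · exact ⟨F, Finset.mem_erase.mpr ⟨hFH, hFD⟩, hvF⟩

lemma IsMinimalFacetCover.not_subset_sup (hD : IsMinimalFacetCover V Γ D) (hHD : H ∈ D)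
    (hT : T ⊆ D) (hHT : H ∉ T) : ¬H ⊆ T.sup id := fun hH =>
  hD.2 _ (Finset.erase_ssubset hHD) (hD.1.erase hT hHT hH)

lemma IsMinimalFacetCover.rooted (hD : IsMinimalFacetCover V Γ D) (w : Finset α → ℕ)
    (hw : ∀ F ∈ D, ∀ H ∈ Γ, H ∉ D → w F < w H) : Rooted w Γ D := by
  intro T hT hTne
  obtain ⟨G, hGT, hGmin⟩ := T.exists_min_image w hTne
  refine ⟨G, hGT, fun H hHΓ hHT => le_of_not_gt fun hHG => ?_⟩
  have hHD : H ∈ D := by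
    by_contra hHD
    exact (hw G (hT hGT) H hHΓ hHD).not_gt hHG
  have hHT' : H ∉ T := fun hHT' => (hGmin H hHT').not_gt hHG
  exact hD.not_subset_sup hHD hT hHT' hHT

end FacetCover

lemma not_rooted_of_subset_sup_of_lt {w : Finset α → ℕ} {Γ S T : Finset (Finset α)}
    {F : Finset α} (hTS : T ⊆ S) (hTne : T.Nonempty) (hFΓ : F ∈ Γ) (hFT : F ⊆ T.sup id)
    (hlt : ∀ G ∈ T, w F < w G) : ¬Rooted w Γ S := fun hS => by
  obtain ⟨G, hGT, hG⟩ := hS T hTS hTne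
  exact (hlt G hGT).not_ge (hG F hFΓ hFT)

lemma List.Pairwise.rel_getElem_of_mem_drop {β : Type*} {R : β → β → Prop} {l : List β}
    (hl : l.Pairwise R) {i : ℕ} (hi : i < l.length) {x : β} (hx : x ∈ l.drop (i + 1)) :
    R l[i] x := by
  have hdrop := hl.drop (i := i)
  rw [List.drop_eq_getElem_cons hi, List.pairwise_cons] at hdrop
  exact hdrop.1 x hx

theorem wellOrderedFacetCover_is_lyubeznik_facet_general (Γ : Finset (Finset α))
    (L : List (Finset α)) (hL : IsWellOrderedFacetCover (vertexSet Γ) Γ L)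
    (w : Finset α → ℕ)
    (hordL : ∀ i j : Fin L.length, i < j → w (L.get i) < w (L.get j))
    (hordRest : ∀ F ∈ L, ∀ H ∈ Γ, H ∉ L → w F < w H) :
    Rooted w Γ L.toFinset ∧
      ∀ H ∈ Γ, H ∉ L.toFinset → ¬Rooted w Γ (insert H L.toFinset) := by
  obtain ⟨-, hLΓ, hmin, hwell⟩ := hL
  refine ⟨hmin.rooted w (by simpa using hordRest), fun H hHΓ hHL => ?_⟩
  rw [List.mem_toFinset] at hHL
  obtain ⟨i, hi, hFi⟩ := hwell H hHΓ hHL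
  have hsorted : L.Pairwise (fun F G => w F < w G) := List.pairwise_iff_get.mpr hordL
  refine not_rooted_of_subset_sup_of_lt (T := insert H (L.drop (i + 1)).toFinset)
    (F := L[i]) (Finset.insert_subset_insert H fun F hF => ?_) (Finset.insert_nonempty _ _)
    (hLΓ _ (List.getElem_mem _)) ?_ ?_
  · simpa using List.mem_of_mem_drop (List.mem_toFinset.mp hF)
  · simpa [Finset.sup_insert, ← listUnion_eq_sup] using hFi
  · simp only [Finset.mem_insert, List.mem_toFinset, forall_eq_or_imp]
    exact ⟨hordRest _ (List.getElem_mem _) H hHΓ hHL,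
      fun G hG => hsorted.rel_getElem_of_mem_drop _ hG⟩

/-- If `F_1, ..., F_i` is a well ordered facet cover of the simplicial complex with facet
set `Γ`, then for any total order (encoded by an injective weight `w`) which orders
`F_1 < F_2 < ⋯ < F_i` before all the other facets, the set `{F_1, ..., F_i}` is a facet,
i.e. a maximal rooted face, of the associated Lyubeznik simplicial complex. -/
theorem wellOrderedFacetCover_is_lyubeznik_facet (Γ : Finset (Finset α))
    (hfacets : ∀ F ∈ Γ, ∀ G ∈ Γ, F ⊆ G → F = G)
    (L : List (Finset α)) (hL : IsWellOrderedFacetCover (vertexSet Γ) Γ L)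
    (w : Finset α → ℕ) (hinj : Set.InjOn w Γ)
    (hordL : ∀ i j : Fin L.length, i < j → w (L.get i) < w (L.get j))
    (hordRest : ∀ F ∈ L, ∀ H ∈ Γ, H ∉ L → w F < w H) :
    Rooted w Γ L.toFinset ∧
      ∀ H ∈ Γ, H ∉ L.toFinset → ¬Rooted w Γ (insert H L.toFinset) :=
  wellOrderedFacetCover_is_lyubeznik_facet_general Γ L hL w hordL hordRest
end

section
/- Let Γ be a simplicial complex and F a facet of Γ containing a free vertex. Let Δ be the simplicial complex on vertex set V(Γ) \ F whose facets are the minimal elements of {H \ F : H a facet of Γ, H ≠ F}, and assume V(Δ) = V(Γ) \ F. If the sequence F_1 \ F, ..., F_k \ F is a well ordered facet cover of Δ, then the sequence F_1, ..., F_k, F is a well ordered facet cover of Γ. -/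
open Classical

variable {α : Type*} [DecidableEq α]

/-!
The free vertex of `F` forces `F` into every cover by facets of `Γ`, and a vertex outside `F` is
private to `X` in `Γ` exactly when it is private to `X \ F` in `Δ`; so minimality transfers.
For the ordering, a facet `H ≠ F` contains some facet `K ⊆ H \ F` of `Δ`, and the condition that
`Δ`'s order imposes on `K` lifts to `H` because `F`, placed last, restores everything removed.
-/

open Finset

@[simp] lemma listUnion_nil : listUnion ([] : List (Finset α)) = ∅ := rfl

@[simp] lemma listUnion_cons (X : Finset α) (L : List (Finset α)) :
    listUnion (X :: L) = X ∪ listUnion L := rfl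

lemma listUnion_append (L₁ L₂ : List (Finset α)) :
    listUnion (L₁ ++ L₂) = listUnion L₁ ∪ listUnion L₂ := by
  induction L₁ with
  | nil => simp
  | cons X L ih => simp [ih, union_assoc]

lemma listUnion_map_sdiff (L : List (Finset α)) (F : Finset α) :
    listUnion (L.map (· \ F)) = listUnion L \ F := by
  induction L with
  | nil => simp
  | cons X L ih => simp [ih, union_sdiff_distrib]

lemma isMinimalFacetCover_iff {V : Finset α} {Δ D : Finset (Finset α)} :
    IsMinimalFacetCover V Δ D ↔
      IsFacetCover V Δ D ∧ ∀ X ∈ D, ∃ v ∈ V, v ∈ X ∧ ∀ Y ∈ D, v ∈ Y → Y = X := by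
  constructor
  · rintro ⟨hcov, hmin⟩
    refine ⟨hcov, fun X hX => ?_⟩
    have hnot := hmin (D.erase X) (erase_ssubset hX)
    simp only [IsFacetCover, (erase_subset X D).trans hcov.1, true_and, not_forall] at hnot
    obtain ⟨v, hv, hmiss⟩ := hnot
    obtain ⟨Y, hY, hvY⟩ := hcov.2 v hv
    have eq_of_mem : ∀ Z ∈ D, v ∈ Z → Z = X := fun Z hZ hvZ => by
      by_contra hZX
      exact hmiss ⟨Z, mem_erase.mpr ⟨hZX, hZ⟩, hvZ⟩
    exact ⟨v, hv, eq_of_mem Y hY hvY ▸ hvY, eq_of_mem⟩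
  · rintro ⟨hcov, hpriv⟩
    refine ⟨hcov, fun D' hD' ⟨_, hcov'⟩ => ?_⟩
    obtain ⟨X, hXD, hXD'⟩ := exists_of_ssubset hD'
    obtain ⟨v, hv, -, hvX⟩ := hpriv X hXD
    obtain ⟨Y, hY, hvY⟩ := hcov' v hv
    exact hXD' (hvX Y (hD'.subset hY) hvY ▸ hY)

def IsFacetLocalization (Γ : Finset (Finset α)) (F : Finset α) (Δ : Finset (Finset α)) : Prop :=
  ∀ K, K ∈ Δ ↔ ((∃ H ∈ Γ, H ≠ F ∧ K = H \ F) ∧ ∀ H ∈ Γ, H ≠ F → ¬(H \ F ⊂ K))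

namespace IsFacetLocalization

variable {Γ Δ : Finset (Finset α)} {F : Finset α}

lemma empty_not_mem (hΔ : IsFacetLocalization Γ F Δ)
    (hfacets : ∀ F ∈ Γ, ∀ G ∈ Γ, F ⊆ G → F = G) (hF : F ∈ Γ) : ∅ ∉ Δ := by
  rw [hΔ]
  rintro ⟨⟨H, hH, hHF, hempty⟩, -⟩
  exact hHF (hfacets H hH F hF (sdiff_eq_empty_iff_subset.mp hempty.symm))

lemma exists_mem_subset_sdiff (hΔ : IsFacetLocalization Γ F Δ) {H : Finset α} (hH : H ∈ Γ)
    (hHF : H ≠ F) : ∃ K ∈ Δ, K ⊆ H \ F := by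
  obtain ⟨K, hKH, hKmin⟩ := exists_minimal_le_of_wellFoundedLT
    (fun K => ∃ H ∈ Γ, H ≠ F ∧ K = H \ F) (H \ F) ⟨H, hH, hHF, rfl⟩
  exact ⟨K, (hΔ K).mpr ⟨hKmin.prop, fun H' hH' hH'F => hKmin.not_lt ⟨H', hH', hH'F, rfl⟩⟩, hKH⟩

end IsFacetLocalization

def ExistsSubsetTailUnion (L : List (Finset α)) (H : Finset α) : Prop :=
  ∃ i : ℕ, ∃ h : i + 1 < L.length,
    L.get ⟨i, Nat.lt_of_succ_lt h⟩ ⊆ H ∪ listUnion (L.drop (i + 1))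

lemma existsSubsetTailUnion_append_singleton {L : List (Finset α)} {F H : Finset α} {i : ℕ}
    (hi : i < L.length) (h : L[i] \ F ⊆ H ∪ listUnion (L.drop (i + 1))) :
    ExistsSubsetTailUnion (L ++ [F]) H := by
  refine ⟨i, by simpa using hi, fun x hx => ?_⟩
  rw [List.get_eq_getElem, List.getElem_append_left hi] at hx
  have hx' := fun hxF : x ∉ F => h (mem_sdiff.mpr ⟨hx, hxF⟩)
  rw [List.drop_append_of_le_length hi, listUnion_append]
  simp only [mem_union, listUnion_cons, listUnion_nil, union_empty] at hx' ⊢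
  tauto

lemma isMinimalFacetCover_append_singleton {V : Finset α} {Γ Δ : Finset (Finset α)}
    {F : Finset α} {L : List (Finset α)} (hmemΓ : ∀ X ∈ L ++ [F], X ∈ Γ) (hFV : F ⊆ V)
    (hfree : ∃ v ∈ F, ∀ H ∈ Γ, H ≠ F → v ∉ H) (hnd : (L.map (· \ F)).Nodup)
    (hmin : IsMinimalFacetCover (V \ F) Δ (L.map (· \ F)).toFinset) :
    IsMinimalFacetCover V Γ (L ++ [F]).toFinset := by
  rw [isMinimalFacetCover_iff] at hmin ⊢
  obtain ⟨⟨-, hcov⟩, hpriv⟩ := hmin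
  have hmem : ∀ {X}, X ∈ (L ++ [F]).toFinset ↔ X ∈ L ∨ X = F := by simp [or_comm]
  refine ⟨⟨fun X hX => hmemΓ X (List.mem_toFinset.mp hX), fun v hv => ?_⟩, fun X hX => ?_⟩
  · by_cases hvF : v ∈ F
    · exact ⟨F, hmem.mpr (Or.inr rfl), hvF⟩
    · obtain ⟨K, hK, hvK⟩ := hcov v (mem_sdiff.mpr ⟨hv, hvF⟩)
      obtain ⟨X, hX, rfl⟩ := List.mem_map.mp (List.mem_toFinset.mp hK)
      exact ⟨X, hmem.mpr (Or.inl hX), (mem_sdiff.mp hvK).1⟩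
  · rcases hmem.mp hX with hXL | rfl
    · obtain ⟨w, hw, hwX, hwpriv⟩ := hpriv (X \ F) (by simpa using ⟨X, hXL, rfl⟩)
      obtain ⟨hwX, hwF⟩ := mem_sdiff.mp hwX
      refine ⟨w, (mem_sdiff.mp hw).1, hwX, fun Y hY hwY => ?_⟩
      rcases hmem.mp hY with hYL | rfl
      · exact List.inj_on_of_nodup_map hnd hYL hXL
          (hwpriv _ (by simpa using ⟨Y, hYL, rfl⟩) (mem_sdiff.mpr ⟨hwY, hwF⟩))
      · exact absurd hwY hwF
    · obtain ⟨v, hvF, hvfree⟩ := hfree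
      exact ⟨v, hFV hvF, hvF, fun Y hY hvY =>
        by_contra fun hYF => hvfree Y (hmemΓ Y (List.mem_toFinset.mp hY)) hYF hvY⟩

lemma existsSubsetTailUnion_append_of_localization {Γ Δ : Finset (Finset α)}
    {F H : Finset α} {L : List (Finset α)} (hΔ : IsFacetLocalization Γ F Δ)
    (hwo : ∀ K ∈ Δ, K ∉ L.map (· \ F) → ExistsSubsetTailUnion (L.map (· \ F)) K)
    (hH : H ∈ Γ) (hHF : H ≠ F) : ExistsSubsetTailUnion (L ++ [F]) H := by
  obtain ⟨K, hKΔ, hKH⟩ := hΔ.exists_mem_subset_sdiff hH hHF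
  have hKH' : K ⊆ H := hKH.trans sdiff_subset
  by_cases hKL : K ∈ L.map (· \ F)
  · obtain ⟨i, hi, rfl⟩ := List.mem_iff_getElem.mp hKL
    rw [List.length_map] at hi
    exact existsSubsetTailUnion_append_singleton hi
      (by simpa using hKH'.trans subset_union_left)
  · obtain ⟨i, hi, hsub⟩ := hwo K hKΔ hKL
    simp only [List.get_eq_getElem, List.getElem_map, ← List.map_drop, listUnion_map_sdiff,
      List.length_map] at hi hsub
    exact existsSubsetTailUnion_append_singleton (by omega)
      (hsub.trans (union_subset_union hKH' sdiff_subset))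

/-- If the sequence `F_1 \ F, ..., F_k \ F` is a well ordered facet cover of `Δ`, where
`Δ` is the complex on `V(Γ) \ F` whose facets are the minimal elements of
`{H \ F : H ∈ Γ, H ≠ F}` (the localization of `Γ` without `F`), and `F` is a facet of `Γ`
with a free vertex, then the sequence `F_1, ..., F_k, F` is a well ordered facet cover
of `Γ`. -/
theorem localization_well_ordered_facet_cover (Γ : Finset (Finset α))
    (hfacets : ∀ F ∈ Γ, ∀ G ∈ Γ, F ⊆ G → F = G)
    (F : Finset α) (hF : F ∈ Γ)
    (hfree : ∃ v ∈ F, ∀ H ∈ Γ, H ≠ F → v ∉ H)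
    (Δ : Finset (Finset α))
    (hΔ : ∀ K, K ∈ Δ ↔ ((∃ H ∈ Γ, H ≠ F ∧ K = H \ F) ∧ ∀ H ∈ Γ, H ≠ F → ¬(H \ F ⊂ K)))
    (hV : vertexSet Δ = vertexSet Γ \ F)
    (L : List (Finset α)) (hLΓ : ∀ X ∈ L, X ∈ Γ)
    (hwofc : IsWellOrderedFacetCover (vertexSet Δ) Δ (L.map fun X => X \ F)) :
    IsWellOrderedFacetCover (vertexSet Γ) Γ (L ++ [F]) := by
  obtain ⟨hnd, hmemΔ, hmin, hwo⟩ := hwofc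
  have hFL : F ∉ L := fun hFL => IsFacetLocalization.empty_not_mem hΔ hfacets hF
    (by simpa using hmemΔ _ (List.mem_map_of_mem hFL))
  have hmemΓ : ∀ X ∈ L ++ [F], X ∈ Γ := by
    simpa [or_imp, forall_and] using ⟨hLΓ, hF⟩
  refine ⟨List.concat_eq_append ▸ (hnd.of_map _).concat hFL, hmemΓ, ?_, fun H hH hHL => ?_⟩
  · rw [hV] at hmin
    exact isMinimalFacetCover_append_singleton hmemΓ (le_sup (f := id) hF) hfree hnd hmin
  · exact existsSubsetTailUnion_append_of_localization hΔ hwo hH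
      (fun hHF => hHL (by simp [hHF]))
end

section
/- Let G be a finite simple graph and let d_1, ..., d_n be edges of G. If some permutation of d_1, ..., d_n is a well ordered edge cover of G, then G contains a strongly disjoint set of bouquets B whose union of edge sets equals {d_1, ..., d_n} and whose union of vertex sets equals V(G). -/
open Classical

variable {α : Type*} [DecidableEq α]

/-!
Every edge of a minimal edge cover `S` has a private vertex, otherwise it could be dropped.
Hence two edges of `S` can meet only in non-private vertices, so "meets" is an equivalence
relation on `S` whose classes are vertex-disjoint stars: the bouquets. From each bouquet take the
edge that comes last in the well ordering; these last edges form an induced matching. An edge of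
`S` spanned by them lies in a single bouquet and is therefore its last edge. An edge `h ∉ S`
spanned by them yields, by the well ordering, some `e_i = {r, w}` with center `r` and
`e_i ⊆ h ∪ e_{i+1} ∪ ⋯ ∪ e_n`. A later edge through `w` would equal `e_i`, so `w ∈ h`; this
forces `e_i` to be the last edge of its bouquet, so no later edge contains `r` either, and
`h = e_i ∈ S`.
-/

open Finset

theorem eq_pair_of_card_eq_two {e : Finset α} (he : e.card = 2) {x y : α} (hx : x ∈ e)
    (hy : y ∈ e) (hxy : x ≠ y) : e = {x, y} :=
  (eq_of_subset_of_card_le (insert_subset hx (singleton_subset_iff.2 hy))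
    (by rw [he, card_pair hxy])).symm

theorem exists_eq_pair_of_mem {e : Finset α} (he : e.card = 2) {x : α} (hx : x ∈ e) :
    ∃ y, x ≠ y ∧ e = {x, y} := by
  obtain ⟨a, b, hab, rfl⟩ := card_eq_two.1 he
  rcases mem_insert.1 hx with rfl | hxb
  · exact ⟨b, hab, rfl⟩
  · rw [mem_singleton.1 hxb]
    exact ⟨a, hab.symm, pair_comm a b⟩

theorem mem_listUnion {L : List (Finset α)} {v : α} : v ∈ listUnion L ↔ ∃ F ∈ L, v ∈ F := by
  induction L with
  | nil => simp [listUnion]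
  | cons F L ih => simp [listUnion, ← ih]

theorem IsFacetCover.vertexSet_eq {V : Finset α} {Δ D : Finset (Finset α)}
    (hD : IsFacetCover V Δ D) (hΔ : ∀ e ∈ Δ, e ⊆ V) : vertexSet D = V :=
  subset_antisymm (Finset.sup_le fun e he => hΔ e (hD.1 he)) fun v hv =>
    let ⟨F, hF, hvF⟩ := hD.2 v hv
    mem_sup.2 ⟨F, hF, hvF⟩

/-- The well-ordering condition of `IsWellOrderedFacetCover`, with the position of an edge in
the list replaced by `ord`. -/
def IsWellOrderedBy (ord : Finset α → ℕ) (S Δ : Finset (Finset α)) : Prop :=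
  ∀ H ∈ Δ, H ∉ S → ∃ F ∈ S, ∀ v ∈ F, v ∉ H → ∃ G ∈ S, ord F < ord G ∧ v ∈ G

theorem IsWellOrderedFacetCover.isWellOrderedBy_idxOf {V : Finset α}
    {Δ : Finset (Finset α)} {L : List (Finset α)} (hL : IsWellOrderedFacetCover V Δ L) :
    IsWellOrderedBy L.idxOf L.toFinset Δ := by
  intro H hH hHL
  obtain ⟨i, hi, hsub⟩ := hL.2.2.2 H hH (mt List.mem_toFinset.2 hHL)
  refine ⟨L[i], List.mem_toFinset.2 (List.getElem_mem _), fun v hv hvH => ?_⟩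
  obtain ⟨G, hG, hvG⟩ := mem_listUnion.1 ((mem_union.1 (hsub hv)).resolve_left hvH)
  obtain ⟨j, hj, rfl⟩ := List.mem_drop_iff_getElem.1 hG
  refine ⟨_, List.mem_toFinset.2 (List.getElem_mem _), ?_, hvG⟩
  dsimp only
  rw [hL.1.idxOf_getElem, hL.1.idxOf_getElem]
  omega

theorem Finset.biUnion_univ_equiv {β γ ι : Type*} [DecidableEq γ] [Fintype ι] (M : Finset β)
    (σ : ι ≃ M) (t : β → Finset γ) : univ.biUnion (fun p => t (σ p)) = M.biUnion t := by
  ext x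
  simp only [mem_biUnion, mem_univ, true_and]
  exact ⟨fun ⟨p, hp⟩ => ⟨σ p, (σ p).2, hp⟩,
    fun ⟨b, hb, hx⟩ => ⟨σ.symm ⟨b, hb⟩, by rwa [Equiv.apply_symm_apply]⟩⟩

/-- Among families of `2`-element sets, these are exactly the edge sets of vertex-disjoint
unions of stars. -/
structure IsStarForest (S : Finset (Finset α)) : Prop where
  card_eq_two : ∀ e ∈ S, e.card = 2
  exists_private : ∀ e ∈ S, ∃ v ∈ e, ∀ f ∈ S, v ∈ f → f = e

theorem IsMinimalFacetCover.isStarForest {V : Finset α} {Δ D : Finset (Finset α)}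
    (hD : IsMinimalFacetCover V Δ D) (h2 : ∀ e ∈ D, e.card = 2) : IsStarForest D where
  card_eq_two := h2
  exists_private e he := by
    by_contra! hshared
    refine hD.2 (D.erase e) (erase_ssubset he) ⟨(erase_subset e D).trans hD.1.1, fun v hv => ?_⟩
    obtain ⟨F, hF, hvF⟩ := hD.1.2 v hv
    by_cases hFe : F = e
    · subst hFe
      obtain ⟨g, hg, hvg, hgF⟩ := hshared v hvF
      exact ⟨g, mem_erase.2 ⟨hgF, hg⟩, hvg⟩
    · exact ⟨F, mem_erase.2 ⟨hFe, hF⟩, hvF⟩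

/-- When `S` is a star forest, this is the bouquet of `S` containing `e`. -/
def bouquet (S : Finset (Finset α)) (e : Finset α) : Finset (Finset α) :=
  {f ∈ S | ¬Disjoint e f}

def lastEdges (S : Finset (Finset α)) (ord : Finset α → ℕ) : Finset (Finset α) :=
  {F ∈ S | ∀ G ∈ bouquet S F, ord G ≤ ord F}

section Bouquets

variable {S : Finset (Finset α)} {e f g F F' H : Finset α} {ord : Finset α → ℕ}

@[simp]
theorem mem_bouquet : f ∈ bouquet S e ↔ f ∈ S ∧ ¬Disjoint e f :=
  mem_filter

theorem mem_bouquet_symm (he : e ∈ S) (hf : f ∈ bouquet S e) : e ∈ bouquet S f :=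
  mem_bouquet.2 ⟨he, fun h => (mem_bouquet.1 hf).2 h.symm⟩

theorem eq_of_mem_lastEdges_of_not_disjoint (hord : Set.InjOn ord S)
    (hF : F ∈ lastEdges S ord) (hF' : F' ∈ lastEdges S ord) (h : ¬Disjoint F F') : F = F' := by
  obtain ⟨hFS, hFlast⟩ := mem_filter.1 hF
  obtain ⟨hF'S, hF'last⟩ := mem_filter.1 hF'
  refine hord hFS hF'S (le_antisymm ?_ (hFlast F' (mem_bouquet.2 ⟨hF'S, h⟩)))
  exact hF'last F (mem_bouquet.2 ⟨hFS, fun h' => h h'.symm⟩)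

theorem image_pair_erase_sup {C : Finset (Finset α)} {r : α}
    (hC : ∀ f ∈ C, f.card = 2 ∧ r ∈ f) :
    ((C.sup id).erase r).image (fun z => ({r, z} : Finset α)) = C := by
  ext f
  simp only [mem_image, mem_erase, mem_sup, id]
  constructor
  · rintro ⟨z, ⟨hzr, g, hg, hzg⟩, rfl⟩
    rwa [← eq_pair_of_card_eq_two (hC g hg).1 (hC g hg).2 hzg (Ne.symm hzr)]
  · intro hf
    obtain ⟨z, hrz, hfz⟩ := exists_eq_pair_of_mem (hC f hf).1 (hC f hf).2
    exact ⟨z, ⟨hrz.symm, f, hf, hfz ▸ mem_insert_of_mem (mem_singleton_self z)⟩, hfz.symm⟩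

namespace IsStarForest

theorem eq_of_mem_inter_of_mem_inter (hS : IsStarForest S) (he : e ∈ S) (hf : f ∈ S)
    (hg : g ∈ S) (hfe : f ≠ e) (hge : g ≠ e) {x y : α} (hx : x ∈ e ∩ f) (hy : y ∈ e ∩ g) :
    x = y := by
  obtain ⟨⟨hxe, hxf⟩, ⟨hye, hyg⟩⟩ := And.intro (mem_inter.1 hx) (mem_inter.1 hy)
  by_contra hxy
  obtain ⟨v, hve, hv⟩ := hS.exists_private e he
  rw [eq_pair_of_card_eq_two (hS.card_eq_two e he) hxe hye hxy, mem_insert, mem_singleton] at hve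
  rcases hve with rfl | rfl
  · exact hfe (hv f hf hxf)
  · exact hge (hv g hg hyg)

theorem not_disjoint_trans (hS : IsStarForest S) (he : e ∈ S) (hf : f ∈ S) (hg : g ∈ S)
    (hef : ¬Disjoint e f) (hfg : ¬Disjoint f g) : ¬Disjoint e g := by
  rcases eq_or_ne e f with rfl | hef'
  · exact hfg
  rcases eq_or_ne g f with rfl | hgf
  · exact hef
  obtain ⟨x, hxe, hxf⟩ := not_disjoint_iff.1 hef
  obtain ⟨y, hyf, hyg⟩ := not_disjoint_iff.1 hfg
  rw [hS.eq_of_mem_inter_of_mem_inter hf he hg hef' hgf (mem_inter.2 ⟨hxf, hxe⟩)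
    (mem_inter.2 ⟨hyf, hyg⟩)] at hxe
  exact not_disjoint_iff.2 ⟨y, hxe, hyg⟩

theorem mem_bouquet_self (hS : IsStarForest S) (he : e ∈ S) : e ∈ bouquet S e := by
  refine mem_bouquet.2 ⟨he, ?_⟩
  rw [disjoint_self_iff_empty, ← Finset.card_eq_zero, hS.card_eq_two e he]
  exact two_ne_zero

theorem bouquet_eq (hS : IsStarForest S) (he : e ∈ S) (hf : f ∈ bouquet S e) :
    bouquet S f = bouquet S e := by
  obtain ⟨hfS, hef⟩ := mem_bouquet.1 hf
  ext g
  simp only [mem_bouquet, and_congr_right_iff]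
  exact fun hg => ⟨hS.not_disjoint_trans he hfS hg hef,
    hS.not_disjoint_trans hfS he hg fun h => hef h.symm⟩

theorem exists_center (hS : IsStarForest S) (he : e ∈ S) :
    ∃ r w, r ≠ w ∧ e = {r, w} ∧ ∀ f ∈ bouquet S e, r ∈ f := by
  by_cases halone : ∀ f ∈ bouquet S e, f = e
  · obtain ⟨r, w, hrw, rfl⟩ := Finset.card_eq_two.1 (hS.card_eq_two e he)
    exact ⟨r, w, hrw, rfl, fun f hf => halone f hf ▸ mem_insert_self r {w}⟩
  push Not at halone
  obtain ⟨f, hf, hfe⟩ := halone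
  obtain ⟨hfS, hef⟩ := mem_bouquet.1 hf
  obtain ⟨r, hre, hrf⟩ := not_disjoint_iff.1 hef
  obtain ⟨w, hrw, hew⟩ := exists_eq_pair_of_mem (hS.card_eq_two e he) hre
  refine ⟨r, w, hrw, hew, fun g hg => ?_⟩
  obtain ⟨hgS, heg⟩ := mem_bouquet.1 hg
  rcases eq_or_ne g e with rfl | hge
  · exact hre
  obtain ⟨y, hye, hyg⟩ := not_disjoint_iff.1 heg
  rwa [hS.eq_of_mem_inter_of_mem_inter he hfS hgS hfe hge (mem_inter.2 ⟨hre, hrf⟩)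
    (mem_inter.2 ⟨hye, hyg⟩)]

theorem exists_mem_lastEdges (hS : IsStarForest S) (ord : Finset α → ℕ) (he : e ∈ S) :
    ∃ F ∈ lastEdges S ord, F ∈ bouquet S e := by
  obtain ⟨F, hF, hlast⟩ := exists_max_image (bouquet S e) ord ⟨e, hS.mem_bouquet_self he⟩
  refine ⟨F, mem_filter.2 ⟨(mem_bouquet.1 hF).1, ?_⟩, hF⟩
  rwa [hS.bouquet_eq he hF]

theorem biUnion_lastEdges_bouquet (hS : IsStarForest S) (ord : Finset α → ℕ) :
    (lastEdges S ord).biUnion (bouquet S) = S := by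
  ext e
  simp only [mem_biUnion]
  refine ⟨fun ⟨F, _, heF⟩ => (mem_bouquet.1 heF).1, fun he => ?_⟩
  obtain ⟨F, hF, hFe⟩ := hS.exists_mem_lastEdges ord he
  exact ⟨F, hF, mem_bouquet_symm he hFe⟩

theorem disjoint_sup_bouquet (hS : IsStarForest S) (hord : Set.InjOn ord S)
    (hF : F ∈ lastEdges S ord) (hF' : F' ∈ lastEdges S ord) (hne : F ≠ F') :
    Disjoint ((bouquet S F).sup id) ((bouquet S F').sup id) := by
  rw [disjoint_left]
  intro x hx hx'
  obtain ⟨g, hg, hxg⟩ := mem_sup.1 hx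
  obtain ⟨g', hg', hxg'⟩ := mem_sup.1 hx'
  obtain ⟨hgS, hFg⟩ := mem_bouquet.1 hg
  obtain ⟨hg'S, hF'g'⟩ := mem_bouquet.1 hg'
  have hFS := (mem_filter.1 hF).1
  have hFg' := hS.not_disjoint_trans hFS hgS hg'S hFg (not_disjoint_iff.2 ⟨x, hxg, hxg'⟩)
  exact hne (eq_of_mem_lastEdges_of_not_disjoint hord hF hF'
    (hS.not_disjoint_trans hFS hg'S (mem_filter.1 hF').1 hFg' fun h => hF'g' h.symm))

theorem mem_lastEdges_of_mem_of_subset_sup (hS : IsStarForest S) (hord : Set.InjOn ord S)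
    (hH : H ∈ S) (hsub : H ⊆ (lastEdges S ord).sup id) : H ∈ lastEdges S ord := by
  obtain ⟨x, hx⟩ := card_pos.1 (by rw [hS.card_eq_two H hH]; exact two_pos)
  obtain ⟨F, hF, hxF⟩ := mem_sup.1 (hsub hx)
  have hFS := (mem_filter.1 hF).1
  suffices H ⊆ F by
    rwa [eq_of_subset_of_card_le this (by rw [hS.card_eq_two H hH, hS.card_eq_two F hFS])]
  intro y hy
  obtain ⟨F', hF', hyF'⟩ := mem_sup.1 (hsub hy)
  have hFF' := hS.not_disjoint_trans hFS hH (mem_filter.1 hF').1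
    (not_disjoint_iff.2 ⟨x, hxF, hx⟩) (not_disjoint_iff.2 ⟨y, hy, hyF'⟩)
  rwa [eq_of_mem_lastEdges_of_not_disjoint hord hF hF' hFF']

theorem eq_of_forall_mem_later (hS : IsStarForest S) (hH : H.card = 2) (hF : F ∈ S)
    (hlater : ∀ v ∈ F, v ∉ H → ∃ G ∈ S, ord F < ord G ∧ v ∈ G)
    (hsub : H ⊆ (lastEdges S ord).sup id) : F = H := by
  obtain ⟨r, w, hrw, rfl, hr⟩ := hS.exists_center hF
  have hedge_through_w : ∀ G ∈ S, w ∈ G → G = {r, w} := fun G hG hwG =>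
    eq_pair_of_card_eq_two (hS.card_eq_two G hG)
      (hr G (mem_bouquet.2 ⟨hG, not_disjoint_iff.2 ⟨w, mem_insert_of_mem
        (mem_singleton_self w), hwG⟩⟩)) hwG hrw
  have hwH : w ∈ H := by
    by_contra hwH
    obtain ⟨G, hG, hlt, hwG⟩ := hlater w (mem_insert_of_mem (mem_singleton_self w)) hwH
    rw [hedge_through_w G hG hwG] at hlt
    exact lt_irrefl _ hlt
  obtain ⟨F', hF', hwF'⟩ := mem_sup.1 (hsub hwH)
  rw [hedge_through_w F' (mem_filter.1 hF').1 hwF'] at hF'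
  have hrH : r ∈ H := by
    by_contra hrH
    obtain ⟨G, hG, hlt, hrG⟩ := hlater r (mem_insert_self r {w}) hrH
    exact (mem_filter.1 hF').2 G
      (mem_bouquet.2 ⟨hG, not_disjoint_iff.2 ⟨r, mem_insert_self r {w}, hrG⟩⟩) |>.not_gt hlt
  exact eq_of_subset_of_card_le (insert_subset hrH (singleton_subset_iff.2 hwH))
    (by rw [hH, card_pair hrw])

theorem mem_lastEdges_of_subset_sup {E : Finset (Finset α)} (hS : IsStarForest S)
    (hord : Set.InjOn ord S) (hwo : IsWellOrderedBy ord S E) (hHE : H ∈ E) (hH : H.card = 2)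
    (hsub : H ⊆ (lastEdges S ord).sup id) : H ∈ lastEdges S ord := by
  refine hS.mem_lastEdges_of_mem_of_subset_sup hord ?_ hsub
  by_contra hHS
  obtain ⟨F, hF, hlater⟩ := hwo H hHE hHS
  exact hHS (hS.eq_of_forall_mem_later hH hF hlater hsub ▸ hF)

end IsStarForest

end Bouquets

theorem IsStarForest.exists_stronglyDisjoint_bouquets {S E : Finset (Finset α)}
    {ord : Finset α → ℕ} (hS : IsStarForest S) (hord : Set.InjOn ord S) (hSE : S ⊆ E)
    (hE : ∀ H ∈ E, H.card = 2) (hwo : IsWellOrderedBy ord S E) :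
    ∃ (q : ℕ) (r : Fin q → α) (Z : Fin q → Finset α) (z' : Fin q → α),
      (∀ p, (Z p).Nonempty ∧ r p ∉ Z p ∧ ∀ z ∈ Z p, ({r p, z} : Finset α) ∈ E) ∧
      (∀ p p', p ≠ p' → Disjoint (insert (r p) (Z p)) (insert (r p') (Z p'))) ∧
      (univ.biUnion fun p => (Z p).image fun z => ({r p, z} : Finset α)) = S ∧
      (univ.biUnion fun p => insert (r p) (Z p)) = vertexSet S ∧
      (∀ p, z' p ∈ Z p) ∧
      (∀ h ∈ E, h ⊆ (univ.biUnion fun p => ({r p, z' p} : Finset α)) →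
        ∃ p, h = ({r p, z' p} : Finset α)) := by
  set M := lastEdges S ord
  set σ : Fin M.card ≃ M := M.equivFin.symm
  have hσS : ∀ p, (σ p : Finset α) ∈ S := fun p => (mem_filter.1 (σ p).2).1
  choose r z' hrz hσ hr using fun p => hS.exists_center (hσS p)
  have hbouquet : ∀ p, ∀ f ∈ bouquet S (σ p), f.card = 2 ∧ r p ∈ f := fun p f hf =>
    ⟨hS.card_eq_two f (mem_bouquet.1 hf).1, hr p f hf⟩
  have hrV : ∀ p, r p ∈ (bouquet S (σ p)).sup id := fun p =>
    mem_sup.2 ⟨σ p, hS.mem_bouquet_self (hσS p), hr p _ (hS.mem_bouquet_self (hσS p))⟩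
  have hz' : ∀ p, z' p ∈ ((bouquet S (σ p)).sup id).erase (r p) := fun p =>
    mem_erase.2 ⟨(hrz p).symm, mem_sup.2 ⟨σ p, hS.mem_bouquet_self (hσS p),
      hσ p ▸ mem_insert_of_mem (mem_singleton_self _)⟩⟩
  refine ⟨M.card, r, fun p => ((bouquet S (σ p)).sup id).erase (r p), z',
    fun p => ⟨⟨z' p, hz' p⟩, notMem_erase _ _, fun z hz => ?_⟩, fun p p' hne => ?_, ?_, ?_, hz', ?_⟩
  · have hzC := mem_image_of_mem (fun z => ({r p, z} : Finset α)) hz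
    rw [image_pair_erase_sup (hbouquet p)] at hzC
    exact hSE (mem_bouquet.1 hzC).1
  · rw [insert_erase (hrV p), insert_erase (hrV p')]
    exact hS.disjoint_sup_bouquet hord (σ p).2 (σ p').2 fun h => hne (σ.injective (Subtype.ext h))
  · simp only [image_pair_erase_sup (hbouquet _)]
    rw [biUnion_univ_equiv M σ (bouquet S), hS.biUnion_lastEdges_bouquet]
  · simp only [insert_erase (hrV _)]
    rw [biUnion_univ_equiv M σ (fun F => (bouquet S F).sup id), ← sup_eq_biUnion, ← sup_biUnion,
      hS.biUnion_lastEdges_bouquet, vertexSet]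
  · intro h hh hsub
    have hchosen : (univ.biUnion fun p => ({r p, z' p} : Finset α)) = M.sup id := by
      simp only [← hσ]
      exact (biUnion_univ_equiv M σ id).trans (sup_eq_biUnion M id).symm
    rw [hchosen] at hsub
    have hhM := hS.mem_lastEdges_of_subset_sup hord hwo hh (hE h hh) hsub
    exact ⟨σ.symm ⟨h, hhM⟩, by rw [← hσ, Equiv.apply_symm_apply]⟩

theorem wellOrderedEdgeCover_gives_strongly_disjoint_bouquets_general (V : Finset α)
    (E : Finset (Finset α)) (hE : ∀ e ∈ E, e.card = 2 ∧ e ⊆ V)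
    (n : ℕ) (d : Fin n → Finset α)
    (hperm : ∃ L : List (Finset α), L.Perm (List.ofFn d) ∧ IsWellOrderedFacetCover V E L) :
    ∃ (q : ℕ) (r : Fin q → α) (Z : Fin q → Finset α) (z' : Fin q → α),
      (∀ p, (Z p).Nonempty ∧ r p ∉ Z p ∧ ∀ z ∈ Z p, ({r p, z} : Finset α) ∈ E) ∧
      (∀ p p', p ≠ p' → Disjoint (insert (r p) (Z p)) (insert (r p') (Z p'))) ∧
      (Finset.univ.biUnion fun p => (Z p).image fun z => ({r p, z} : Finset α)) =
        Finset.univ.image d ∧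
      (Finset.univ.biUnion fun p => insert (r p) (Z p)) = V ∧
      (∀ p, z' p ∈ Z p) ∧
      (∀ h ∈ E, h ⊆ (Finset.univ.biUnion fun p => ({r p, z' p} : Finset α)) →
        ∃ p, h = ({r p, z' p} : Finset α)) := by
  obtain ⟨L, hLd, hL⟩ := hperm
  have hSE : L.toFinset ⊆ E := fun e he => hL.2.1 e (List.mem_toFinset.1 he)
  have hmin : IsMinimalFacetCover V E L.toFinset := hL.2.2.1
  have hS := hmin.isStarForest fun e he => (hE e (hSE he)).1
  have hord : Set.InjOn L.idxOf L.toFinset := fun e he f _ hef =>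
    (List.idxOf_inj (List.mem_toFinset.1 he)).1 hef
  have himage : L.toFinset = univ.image d := by
    ext e
    simp [hLd.mem_iff]
  rw [← himage, ← hmin.1.vertexSet_eq fun e he => (hE e he).2]
  exact hS.exists_stronglyDisjoint_bouquets hord hSE (fun H hH => (hE H hH).1)
    hL.isWellOrderedBy_idxOf

/-- If some permutation of the edges `d_1, ..., d_n` of a finite simple graph
(vertex set `V`, edges the `2`-element sets in `E`) is a well ordered edge cover of the
graph, then the graph contains a strongly disjoint set of bouquets whose union of edge
sets is `{d_1, ..., d_n}` and whose union of vertex sets is `V`: there are pairwise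
vertex-disjoint stars (centers `r p`, leaf sets `Z p`) together with chosen leaves `z' p`
such that the chosen edges `{r p, z' p}` form an induced matching. -/
theorem wellOrderedEdgeCover_gives_strongly_disjoint_bouquets (V : Finset α)
    (E : Finset (Finset α)) (hE : ∀ e ∈ E, e.card = 2 ∧ e ⊆ V)
    (n : ℕ) (d : Fin n → Finset α) (hd : ∀ p, d p ∈ E)
    (hperm : ∃ L : List (Finset α), L.Perm (List.ofFn d) ∧ IsWellOrderedFacetCover V E L) :
    ∃ (q : ℕ) (r : Fin q → α) (Z : Fin q → Finset α) (z' : Fin q → α),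
      (∀ p, (Z p).Nonempty ∧ r p ∉ Z p ∧ ∀ z ∈ Z p, ({r p, z} : Finset α) ∈ E) ∧
      (∀ p p', p ≠ p' → Disjoint (insert (r p) (Z p)) (insert (r p') (Z p'))) ∧
      (Finset.univ.biUnion fun p => (Z p).image fun z => ({r p, z} : Finset α)) =
        Finset.univ.image d ∧
      (Finset.univ.biUnion fun p => insert (r p) (Z p)) = V ∧
      (∀ p, z' p ∈ Z p) ∧
      (∀ h ∈ E, h ⊆ (Finset.univ.biUnion fun p => ({r p, z' p} : Finset α)) →
        ∃ p, h = ({r p, z' p} : Finset α)) :=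
  wellOrderedEdgeCover_gives_strongly_disjoint_bouquets_general V E hE n d hperm
end

section
/- Let I be a monomial ideal in a polynomial ring S over a field, with minimal generating set totally ordered by <. Suppose F = {m_{t_1}, ..., m_{t_i}} is a facet of the Lyubeznik simplicial complex Λ_{I,<} such that for every j, the lcm of F minus m_{t_j} is strictly smaller than lcm(F). Then the multigraded Betti number b_{i, q}(S/I) is nonzero, where q = lcm(m_{t_1}, ..., m_{t_i}). -/
/-!
The Betti number is the homology, in degree `|F| - 2`, of the subcomplex `K` of the Taylor
simplex formed by the faces whose lcm strictly divides `q = lcm F`. Every facet `F \ {v}` lies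
in `K`, so `∂F` is a cycle of `K`; it is not a boundary.

Rootedness and maximality of `F` give a retraction `ρ` of the generators onto `F` such that
`m_{ρ v}` divides `lcm(m_v, m_j : j ∈ F, j > ρ v)` whenever `m_v` divides `q`. Hence a face that
`ρ` maps onto `F` has lcm `q`, so `ρ` maps `K` into the boundary sphere of the simplex `F`.
Pulling back the orientation cocycle of that sphere along `ρ` gives a cocycle of `K` whose value
on `∂F` is `±1`.
-/

open Classical

/-- Chains of the (augmented) Taylor subcomplex determined by the predicate `P` on
subsets of the `s` generators: the free `k`-module on faces of cardinality `j`
(the empty face corresponds to `j = 0`). -/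
noncomputable abbrev TaylorChain (k : Type) [Field k] (s : ℕ) (P : Finset (Fin s) → Prop)
    (j : ℕ) : Type :=
  {σ : Finset (Fin s) // P σ ∧ σ.card = j} → k

/-- The simplicial boundary map from chains on faces of cardinality `j + 1` to chains on
faces of cardinality `j`, with the usual signs. -/
noncomputable def taylorBd (k : Type) [Field k] (s : ℕ) (P : Finset (Fin s) → Prop) (j : ℕ) :
    TaylorChain k s P (j + 1) →ₗ[k] TaylorChain k s P j where
  toFun f τ := ∑ v : Fin s,
    if h : v ∉ τ.1 ∧ P (insert v τ.1) then
      (-1 : k) ^ (τ.1.filter (· < v)).card *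
        f ⟨insert v τ.1, h.2, by rw [Finset.card_insert_of_notMem h.1, τ.2.2]⟩
    else 0
  map_add' f g := by
    funext τ
    simp only [Pi.add_apply]
    rw [← Finset.sum_add_distrib]
    refine Finset.sum_congr rfl fun v _ => ?_
    split
    · simp [mul_add]
    · simp
  map_smul' c f := by
    funext τ
    simp only [Pi.smul_apply, smul_eq_mul, RingHom.id_apply]
    rw [Finset.mul_sum]
    refine Finset.sum_congr rfl fun v _ => ?_
    split
    · ring
    · simp

/-- The multigraded Betti number `b_{i,m}(S/I)` of the quotient by a monomial ideal `I`
with `s` generators, computed via the Bayer–Peeva–Sturmfels formula: for `i ≥ 1` it is the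
dimension of the `(i - 2)`nd reduced simplicial homology of the subcomplex of the Taylor
complex consisting of the faces whose lcm strictly divides `m`; that subcomplex is recorded
by the predicate `P` (with faces indexed by their cardinality, the empty face included), so
that `b_{i,m}(S/I) = dim ker ∂_{i-1} - dim im ∂_i`. -/
noncomputable def bettiOfTaylor (k : Type) [Field k] (s : ℕ)
    (P : Finset (Fin s) → Prop) : ℕ → ℕ
  | 0 => if P ∅ then 0 else 1
  | 1 => Module.finrank k (TaylorChain k s P 0) -
      Module.finrank k (LinearMap.range (taylorBd k s P 0))
  | (i + 2) => Module.finrank k (LinearMap.ker (taylorBd k s P i)) -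
      Module.finrank k (LinearMap.range (taylorBd k s P (i + 1)))

namespace Finset

variable {α : Type*} [LinearOrder α]

theorem card_filter_lt_insert {τ : Finset α} {v u : α} (hv : v ∉ τ) :
    ((insert v τ).filter (· < u)).card = (τ.filter (· < u)).card + if v < u then 1 else 0 := by
  rw [filter_insert]
  split_ifs
  · rw [card_insert_of_notMem fun h => hv (mem_filter.mp h).1]
  · rfl

theorem card_filter_lt_orderEmbOfFin {c : ℕ} (σ : Finset α) (hσ : σ.card = c) (r : Fin c) :
    (σ.filter (· < σ.orderEmbOfFin hσ r)).card = r := by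
  have : σ.filter (· < σ.orderEmbOfFin hσ r) = (Iio r).map (σ.orderEmbOfFin hσ).toEmbedding := by
    ext x
    simp only [mem_filter, mem_map, mem_Iio, RelEmbedding.coe_toEmbedding]
    constructor
    · rintro ⟨hx, hlt⟩
      obtain ⟨t, rfl⟩ : x ∈ Set.range (σ.orderEmbOfFin hσ) := by rwa [range_orderEmbOfFin]
      exact ⟨t, (σ.orderEmbOfFin hσ).lt_iff_lt.mp hlt, rfl⟩
    · rintro ⟨t, ht, rfl⟩
      exact ⟨σ.orderEmbOfFin_mem hσ t, (σ.orderEmbOfFin hσ).lt_iff_lt.mpr ht⟩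
  rw [this, card_map, Fin.card_Iio]

theorem orderEmbOfFin_erase {c : ℕ} (σ : Finset α) (hσ : σ.card = c + 1) (r : Fin (c + 1))
    (h : (σ.erase (σ.orderEmbOfFin hσ r)).card = c) (r' : Fin c) :
    (σ.erase (σ.orderEmbOfFin hσ r)).orderEmbOfFin h r' = σ.orderEmbOfFin hσ (r.succAbove r') := by
  refine congrFun (orderEmbOfFin_unique h (fun r' => mem_erase.mpr ⟨?_, ?_⟩)
    ((σ.orderEmbOfFin hσ).strictMono.comp (Fin.strictMono_succAbove r))).symm r'
  · exact fun he => Fin.succAbove_ne r r' ((σ.orderEmbOfFin hσ).injective he)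
  · exact σ.orderEmbOfFin_mem hσ _

end Finset

namespace Taylor

variable {k : Type} [Field k] {α : Type*} [LinearOrder α]

def coboundary (D : Finset α → k) (σ : Finset α) : k :=
  ∑ v ∈ σ, (-1) ^ (σ.filter (· < v)).card * D (σ.erase v)

/-- Pulls back the orientation cochain of the face `E` along `ρ`: `±1` when `ρ` maps `τ`
bijectively onto `E`, with the sign of that bijection, and `0` otherwise. -/
noncomputable def incidenceDet (ρ : α → α) (E τ : Finset α) : k :=
  if h : τ.card = E.card then
    (Matrix.of fun r c : Fin E.card =>
      if ρ (τ.orderEmbOfFin h r) = E.orderEmbOfFin rfl c then (1 : k) else 0).det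
  else 0

theorem incidenceDet_self {ρ : α → α} {E : Finset α} (hρ : ∀ x ∈ E, ρ x = x) :
    incidenceDet ρ E E = (1 : k) := by
  rw [incidenceDet, dif_pos rfl]
  convert Matrix.det_one (R := k) (n := Fin E.card) using 2
  ext r c
  simp only [Matrix.of_apply, hρ _ (E.orderEmbOfFin_mem rfl r),
    (E.orderEmbOfFin rfl).injective.eq_iff, Matrix.one_apply]

theorem incidenceDet_eq_zero {ρ : α → α} {E τ : Finset α} {x : α} (hx : x ∈ τ) (hρx : ρ x ∉ E) :
    incidenceDet ρ E τ = (0 : k) := by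
  rw [incidenceDet]
  split_ifs with h
  · obtain ⟨r, rfl⟩ : x ∈ Set.range (τ.orderEmbOfFin h) := by
      rwa [Finset.range_orderEmbOfFin]
    refine Matrix.det_eq_zero_of_row_eq_zero r fun c => if_neg fun he => hρx ?_
    exact (he : ρ _ = _) ▸ E.orderEmbOfFin_mem rfl c
  · rfl

/-- The alternating sum is the expansion along the first column of the matrix obtained by
adding a column of ones; two of its rows coincide because `ρ` identifies two vertices. -/
theorem coboundary_incidenceDet {ρ : α → α} {E σ : Finset α}
    (hσ : σ.card = E.card + 1) (hρ : ¬Set.InjOn ρ σ) :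
    coboundary (incidenceDet ρ E) σ = (0 : k) := by
  let N : Matrix (Fin (E.card + 1)) (Fin (E.card + 1)) k := Matrix.of fun r =>
    Fin.cons 1 fun c => if ρ (σ.orderEmbOfFin hσ r) = E.orderEmbOfFin rfl c then 1 else 0
  have hN : N.det = 0 := by
    obtain ⟨a, ha, b, hb, hab, hne⟩ : ∃ a ∈ σ, ∃ b ∈ σ, ρ a = ρ b ∧ a ≠ b := by
      simpa [Set.InjOn] using hρ
    obtain ⟨ra, rfl⟩ : a ∈ Set.range (σ.orderEmbOfFin hσ) := by rwa [Finset.range_orderEmbOfFin]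
    obtain ⟨rb, rfl⟩ : b ∈ Set.range (σ.orderEmbOfFin hσ) := by rwa [Finset.range_orderEmbOfFin]
    refine Matrix.det_zero_of_row_eq (fun h => hne (congrArg _ h)) (funext fun c => ?_)
    refine Fin.cases rfl (fun c => ?_) c
    simp only [N, Matrix.of_apply, Fin.cons_succ, hab]
  rw [Matrix.det_succ_column_zero] at hN
  rw [coboundary, ← hN]
  conv_lhs => enter [1]; rw [← σ.map_orderEmbOfFin_univ hσ]
  rw [Finset.sum_map]
  refine Finset.sum_congr rfl fun r _ => ?_
  have hcard : (σ.erase (σ.orderEmbOfFin hσ r)).card = E.card := by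
    rw [Finset.card_erase_of_mem (σ.orderEmbOfFin_mem hσ r), hσ, Nat.add_sub_cancel]
  simp only [RelEmbedding.coe_toEmbedding, Finset.card_filter_lt_orderEmbOfFin, incidenceDet,
    dif_pos hcard, N, Matrix.of_apply, Fin.cons_zero, mul_one]
  congr 2
  ext r' c
  simp only [Matrix.of_apply, Matrix.submatrix_apply, Fin.cons_succ, Finset.orderEmbOfFin_erase]

theorem coboundary_incidenceDet_erase {ρ : α → α} {F : Finset α} {j₀ : α}
    (hj₀ : j₀ ∈ F) (hρ : ∀ x ∈ F, ρ x = x) :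
    coboundary (incidenceDet ρ (F.erase j₀)) F = (-1 : k) ^ (F.filter (· < j₀)).card := by
  rw [coboundary, Finset.sum_eq_single j₀, incidenceDet_self fun x hx =>
    hρ x (Finset.mem_of_mem_erase hx), mul_one]
  · intro v hv hvj₀
    rw [incidenceDet_eq_zero (Finset.mem_erase.mpr ⟨Ne.symm hvj₀, hj₀⟩)
      (by rw [hρ j₀ hj₀]; exact Finset.notMem_erase j₀ F), mul_zero]
  · exact fun h => absurd hj₀ h

variable [Fintype α]

def boundary (f : Finset α → k) (τ : Finset α) : k :=
  ∑ v ∈ τᶜ, (-1) ^ (τ.filter (· < v)).card * f (insert v τ)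

theorem boundary_boundary (f : Finset α → k) : boundary (boundary f) = 0 := by
  funext τ
  have hmem : ∀ {v u : α}, v ∈ τᶜ → u ∈ (insert v τ)ᶜ → u ∈ τᶜ ∧ v ∈ (insert u τ)ᶜ ∧ v ≠ u :=
    fun hv hu => by simp_all [eq_comm]
  simp only [boundary, Finset.mul_sum, Pi.zero_apply]
  rw [Finset.sum_sigma']
  refine Finset.sum_involution (fun p _ => ⟨p.2, p.1⟩) (fun ⟨v, u⟩ hp => ?_)
    (fun ⟨v, u⟩ hp _ h => ?_) (fun ⟨v, u⟩ hp => ?_) (fun _ _ => rfl)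
  · obtain ⟨hv, hu⟩ := Finset.mem_sigma.mp hp
    obtain ⟨hu', -, hvu⟩ := hmem hv hu
    simp only [Finset.insert_comm u v, Finset.card_filter_lt_insert (Finset.mem_compl.mp hv),
      Finset.card_filter_lt_insert (Finset.mem_compl.mp hu'), pow_add]
    rcases hvu.lt_or_gt with h | h <;>
      simp only [h, h.not_gt, if_true, if_false, pow_one, pow_zero] <;> ring
  · obtain ⟨hv, hu⟩ := Finset.mem_sigma.mp hp
    exact (hmem hv hu).2.2 (congrArg Sigma.fst h).symm
  · obtain ⟨hv, hu⟩ := Finset.mem_sigma.mp hp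
    exact Finset.mem_sigma.mpr ⟨(hmem hv hu).1, (hmem hv hu).2.1⟩

theorem sum_mul_boundary (D f : Finset α → k) :
    ∑ τ, D τ * boundary f τ = ∑ σ, coboundary D σ * f σ := by
  calc ∑ τ, D τ * boundary f τ
      = ∑ v, ∑ τ ∈ Finset.univ.filter (v ∉ ·),
          (-1) ^ (τ.filter (· < v)).card * D τ * f (insert v τ) := by
        simp only [boundary, Finset.mul_sum]
        refine Finset.sum_comm' (by simp) |>.trans (Finset.sum_congr rfl fun v _ =>
          Finset.sum_congr rfl fun τ _ => by ring)
    _ = ∑ v, ∑ σ ∈ Finset.univ.filter (v ∈ ·),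
          (-1) ^ (σ.filter (· < v)).card * D (σ.erase v) * f σ := by
        refine Finset.sum_congr rfl fun v _ => Finset.sum_nbij' (insert v) (Finset.erase · v)
          (by simp) (by simp) (fun τ hτ => ?_) (fun σ hσ => ?_) (fun τ hτ => ?_)
        · exact Finset.erase_insert (Finset.mem_filter.mp hτ).2
        · exact Finset.insert_erase (Finset.mem_filter.mp hσ).2
        · rw [Finset.erase_insert (Finset.mem_filter.mp hτ).2, Finset.filter_insert,
            if_neg (lt_irrefl v)]
    _ = ∑ σ, coboundary D σ * f σ := by
        simp only [coboundary, Finset.sum_mul]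
        exact (Finset.sum_comm' (by simp)).symm

theorem exists_eq_erase_of_boundary_single_ne_zero {F τ : Finset α} {c : k}
    (h : boundary (Pi.single F c) τ ≠ 0) : ∃ v ∈ F, τ = F.erase v := by
  by_contra! hτ
  refine h (Finset.sum_eq_zero fun v hv => ?_)
  rw [Pi.single_apply, if_neg, mul_zero]
  rintro rfl
  exact hτ v (Finset.mem_insert_self v τ) (Finset.erase_insert (Finset.mem_compl.mp hv)).symm

variable {s : ℕ} (P : Finset (Fin s) → Prop)

noncomputable def extend {j : ℕ} (f : TaylorChain k s P j) (σ : Finset (Fin s)) : k :=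
  if h : P σ ∧ σ.card = j then f ⟨σ, h⟩ else 0

theorem extend_injective (j : ℕ) : Function.Injective (extend (k := k) P (j := j)) := by
  intro f g h
  funext σ
  simpa [extend, σ.2] using congrFun h σ.1

variable {P} in
@[simp] theorem extend_zero {j : ℕ} : extend P (0 : TaylorChain k s P j) = 0 := by
  funext σ
  simp [extend]

theorem extend_taylorBd (hP : IsLowerSet {σ | P σ}) (j : ℕ) (f : TaylorChain k s P (j + 1)) :
    extend P (taylorBd k s P j f) = boundary (extend P f) := by
  funext τ
  by_cases hτ : P τ ∧ τ.card = j
  · rw [extend, dif_pos hτ, boundary]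
    simp only [taylorBd, LinearMap.coe_mk, AddHom.coe_mk]
    refine (Finset.sum_subset (Finset.subset_univ τᶜ) fun v _ hv => dif_neg fun h =>
      hv (Finset.mem_compl.mpr h.1)).symm.trans (Finset.sum_congr rfl fun v hv => ?_)
    have hv := Finset.mem_compl.mp hv
    by_cases hvP : P (insert v τ)
    · rw [dif_pos ⟨hv, hvP⟩, extend,
        dif_pos ⟨hvP, by rw [Finset.card_insert_of_notMem hv, hτ.2]⟩]
    · rw [dif_neg (fun h => hvP h.2), extend, dif_neg (fun h => hvP h.1), mul_zero]
  · rw [extend, dif_neg hτ, boundary]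
    refine (Finset.sum_eq_zero fun v hv => ?_).symm
    rw [extend, dif_neg, mul_zero]
    rintro ⟨hvP, hcard⟩
    rw [Finset.card_insert_of_notMem (Finset.mem_compl.mp hv)] at hcard
    exact hτ ⟨hP (Finset.subset_insert v τ) hvP, by omega⟩

theorem taylorBd_taylorBd (hP : IsLowerSet {σ | P σ}) (j : ℕ) (f : TaylorChain k s P (j + 2)) :
    taylorBd k s P j (taylorBd k s P (j + 1) f) = 0 :=
  extend_injective P j (by
    rw [extend_taylorBd P hP, extend_taylorBd P hP, boundary_boundary, extend_zero])

theorem bettiOfTaylor_ne_zero_of_pairing (hP : IsLowerSet {σ | P σ}) (j : ℕ)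
    (z D : Finset (Fin s) → k) (hz : ∀ τ, z τ ≠ 0 → P τ ∧ τ.card = j + 1)
    (hz_cycle : boundary z = 0) (hD : ∀ σ, P σ → σ.card = j + 2 → coboundary D σ = 0)
    (hDz : ∑ τ, D τ * z τ ≠ 0) :
    bettiOfTaylor k s P (j + 2) ≠ 0 := by
  let z' : TaylorChain k s P (j + 1) := fun τ => z τ.1
  have hz' : extend P z' = z := by
    funext τ
    rw [extend]
    split_ifs with h
    · rfl
    · exact (not_not.mp fun hne => h (hz τ hne)).symm
  have hker : z' ∈ LinearMap.ker (taylorBd k s P j) :=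
    extend_injective P j (by rw [extend_taylorBd P hP, hz', hz_cycle, extend_zero])
  have hrange : z' ∉ LinearMap.range (taylorBd k s P (j + 1)) := by
    rintro ⟨w, hw⟩
    rw [← hz', ← hw, extend_taylorBd P hP, sum_mul_boundary] at hDz
    refine hDz (Finset.sum_eq_zero fun σ _ => ?_)
    rw [extend]
    split_ifs with h
    · rw [hD σ h.1 h.2, zero_mul]
    · rw [mul_zero]
  have hlt : LinearMap.range (taylorBd k s P (j + 1)) < LinearMap.ker (taylorBd k s P j) :=
    lt_of_le_of_ne (by rintro _ ⟨f, rfl⟩; exact taylorBd_taylorBd P hP j f)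
      fun h => hrange (h ▸ hker)
  have := Submodule.finrank_lt_finrank_of_lt hlt
  simp only [bettiOfTaylor]
  omega

theorem bettiOfTaylor_ne_zero_of_coboundary_ne_zero (hP : IsLowerSet {σ | P σ}) {j : ℕ}
    {F : Finset (Fin s)} (hF : F.card = j + 2) (hfacets : ∀ v ∈ F, P (F.erase v))
    {D : Finset (Fin s) → k} (hD : ∀ σ, P σ → σ.card = j + 2 → coboundary D σ = 0)
    (hDF : coboundary D F ≠ 0) :
    bettiOfTaylor k s P (j + 2) ≠ 0 := by
  refine bettiOfTaylor_ne_zero_of_pairing P hP j (boundary (Pi.single F 1)) D (fun τ hτ => ?_)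
    (boundary_boundary _) hD (by simpa [sum_mul_boundary, Pi.single_apply] using hDF)
  obtain ⟨v, hv, rfl⟩ := exists_eq_erase_of_boundary_single_ne_zero hτ
  exact ⟨hfacets v hv, by rw [Finset.card_erase_of_mem hv, hF]; rfl⟩

theorem bettiOfTaylor_one_ne_zero (h₀ : P ∅) (h₁ : ∀ σ, P σ → σ.card ≠ 1) :
    bettiOfTaylor k s P 1 ≠ 0 := by
  have : IsEmpty {σ // P σ ∧ σ.card = 1} := ⟨fun σ => h₁ σ.1 σ.2.1 σ.2.2⟩
  have : Nonempty {σ // P σ ∧ σ.card = 0} := ⟨⟨∅, h₀, rfl⟩⟩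
  have hzero : taylorBd k s P 0 = 0 := LinearMap.ext fun f => by
    rw [Subsingleton.elim f 0, map_zero, LinearMap.zero_apply]
  show Module.finrank k _ - Module.finrank k (LinearMap.range (taylorBd k s P 0)) ≠ 0
  rw [hzero, LinearMap.range_zero, finrank_bot, Nat.sub_zero]
  exact Module.finrank_pos.ne'

end Taylor

namespace Lyubeznik

variable {n s : ℕ} (m : Fin s → Fin n → ℕ)

def IsRooted (F : Finset (Fin s)) : Prop :=
  ∀ T ⊆ F, T.Nonempty → ∃ i₀ ∈ T, ∀ j, m j ≤ T.sup m → i₀ ≤ j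

variable {m} {F : Finset (Fin s)}

/-- A set `V ⊆ insert v F` witnessing that `insert v F` is not rooted must contain `v`; the least
generator `b` dividing `lcm V` precedes all of `V`, and either lies in `F` or, dividing `lcm F`,
descends further. -/
theorem exists_lt_le_sup_of_isRooted (hF : IsRooted m F)
    (hmax : ∀ l ∉ F, ¬IsRooted m (insert l F)) {v : Fin s} (hv : v ∉ F) (hvq : m v ≤ F.sup m) :
    ∃ j ∈ F, j < v ∧ m j ≤ m v ⊔ (F.filter (j < ·)).sup m := by
  induction v using WellFoundedLT.induction with
  | _ v IH =>
  obtain ⟨V, hVsub, ⟨i, hi⟩, hVbad⟩ : ∃ V ⊆ insert v F, V.Nonempty ∧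
      ∀ i ∈ V, ∃ j, m j ≤ V.sup m ∧ j < i := by
    simpa [IsRooted] using hmax v hv
  obtain ⟨b, hb, hbmin⟩ := (Finset.univ.filter fun j => m j ≤ V.sup m).exists_min_image id
    ⟨i, Finset.mem_filter.mpr ⟨Finset.mem_univ i, Finset.le_sup hi⟩⟩
  replace hb : m b ≤ V.sup m := (Finset.mem_filter.mp hb).2
  have hbV : ∀ i ∈ V, b < i := fun i hi => by
    obtain ⟨j, hj, hji⟩ := hVbad i hi
    exact (hbmin j (Finset.mem_filter.mpr ⟨Finset.mem_univ j, hj⟩)).trans_lt hji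
  have hvV : v ∈ V := by
    by_contra hvV
    obtain ⟨i₀, hi₀, hi₀min⟩ := hF V (fun x hx => (Finset.mem_insert.mp (hVsub hx)).resolve_left
      (fun h => hvV (h ▸ hx))) ⟨i, hi⟩
    exact not_le_of_gt (hbV i₀ hi₀) (hi₀min b hb)
  have hVsup : V.sup m ≤ m v ⊔ (F.filter (b < ·)).sup m := Finset.sup_le fun i hi => by
    rcases Finset.mem_insert.mp (hVsub hi) with rfl | hiF
    · exact le_sup_left
    · exact le_sup_of_le_right (Finset.le_sup (Finset.mem_filter.mpr ⟨hiF, hbV i hi⟩))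
  by_cases hbF : b ∈ F
  · exact ⟨b, hbF, hbV v hvV, hb.trans hVsup⟩
  have hbq : m b ≤ F.sup m := hb.trans (Finset.sup_le fun i hi => by
    rcases Finset.mem_insert.mp (hVsub hi) with rfl | hiF
    · exact hvq
    · exact Finset.le_sup hiF)
  obtain ⟨j, hjF, hjb, hj⟩ := IH b (hbV v hvV) hbF hbq
  have htail : (F.filter (b < ·)).sup m ≤ (F.filter (j < ·)).sup m :=
    Finset.sup_mono fun i hi => Finset.mem_filter.mpr
      ⟨(Finset.mem_filter.mp hi).1, hjb.trans (Finset.mem_filter.mp hi).2⟩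
  refine ⟨j, hjF, hjb.trans (hbV v hvV), hj.trans (sup_le ?_ le_sup_right)⟩
  exact (hb.trans hVsup).trans (sup_le_sup_left htail _)

theorem exists_retraction_of_isRooted (hF : IsRooted m F)
    (hmax : ∀ l ∉ F, ¬IsRooted m (insert l F)) (hne : F.Nonempty) :
    ∃ ρ : Fin s → Fin s, (∀ v, ρ v ∈ F) ∧ (∀ v ∈ F, ρ v = v) ∧
      ∀ v, m v ≤ F.sup m → m (ρ v) ≤ m v ⊔ (F.filter (ρ v < ·)).sup m := by
  have : ∀ v, ∃ j ∈ F, (v ∈ F → j = v) ∧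
      (m v ≤ F.sup m → m j ≤ m v ⊔ (F.filter (j < ·)).sup m) := fun v => by
    by_cases hv : v ∈ F
    · exact ⟨v, hv, fun _ => rfl, fun _ => le_sup_left⟩
    by_cases hvq : m v ≤ F.sup m
    · obtain ⟨j, hj, -, hle⟩ := exists_lt_le_sup_of_isRooted hF hmax hv hvq
      exact ⟨j, hj, fun h => absurd h hv, fun _ => hle⟩
    · obtain ⟨j, hj⟩ := hne
      exact ⟨j, hj, fun h => absurd h hv, fun h => absurd h hvq⟩
  choose ρ hρF hρid hρ using this
  exact ⟨ρ, hρF, hρid, hρ⟩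

theorem sup_le_sup_of_subset_image {ρ : Fin s → Fin s}
    (hρ : ∀ v, m v ≤ F.sup m → m (ρ v) ≤ m v ⊔ (F.filter (ρ v < ·)).sup m)
    {G : Finset (Fin s)} (hG : G.sup m ≤ F.sup m) (hFG : F ⊆ G.image ρ) :
    F.sup m ≤ G.sup m := by
  intro x
  obtain hq | hq := Nat.eq_zero_or_pos (F.sup m x)
  · exact hq ▸ Nat.zero_le _
  have hFx : (F.filter fun j => m j x = F.sup m x).Nonempty := by
    have hne : F.Nonempty := Finset.nonempty_iff_ne_empty.mpr (by rintro rfl; simp at hq)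
    obtain ⟨j, hjF, hj⟩ := F.exists_mem_eq_sup hne (m · x)
    exact ⟨j, Finset.mem_filter.mpr ⟨hjF, by rw [Finset.sup_apply, hj]⟩⟩
  obtain ⟨j, hj, hjmax⟩ := Finset.exists_max_image _ id hFx
  obtain ⟨hjF, hjx⟩ := Finset.mem_filter.mp hj
  have htail : (F.filter (j < ·)).sup m x < F.sup m x := by
    rw [Finset.sup_apply, Finset.sup_lt_iff hq]
    intro i hi
    obtain ⟨hiF, hji⟩ := Finset.mem_filter.mp hi
    refine lt_of_le_of_ne (Finset.le_sup (f := m) hiF x) fun h => ?_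
    exact not_le_of_gt hji (hjmax i (Finset.mem_filter.mpr ⟨hiF, h⟩))
  obtain ⟨v, hvG, rfl⟩ := Finset.mem_image.mp (hFG hjF)
  have hv : m (ρ v) x ≤ max (m v x) ((F.filter (ρ v < ·)).sup m x) :=
    hρ v ((Finset.le_sup hvG).trans hG) x
  calc F.sup m x = m (ρ v) x := hjx.symm
    _ ≤ m v x := (le_max_iff.mp hv).resolve_right (by omega)
    _ ≤ G.sup m x := Finset.le_sup (f := m) hvG x

theorem not_injOn_of_sup_lt {ρ : Fin s → Fin s} (hρF : ∀ v, ρ v ∈ F)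
    (hρ : ∀ v, m v ≤ F.sup m → m (ρ v) ≤ m v ⊔ (F.filter (ρ v < ·)).sup m)
    {G : Finset (Fin s)} (hG : G.sup m < F.sup m) (hcard : G.card = F.card) :
    ¬Set.InjOn ρ G := fun hinj => by
  have himage : G.image ρ = F := Finset.eq_of_subset_of_card_le
    (Finset.image_subset_iff.mpr fun v _ => hρF v) (by rw [Finset.card_image_of_injOn hinj, hcard])
  exact not_le_of_gt hG (sup_le_sup_of_subset_image hρ hG.le himage.ge)

end Lyubeznik

theorem lyubeznik_facet_gives_nonzero_betti_general (k : Type) [Field k] (n s : ℕ)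
    (m : Fin s → (Fin n → ℕ))
    (F : Finset (Fin s))
    (hrooted : ∀ T ⊆ F, T.Nonempty → ∃ i₀ ∈ T, ∀ j, m j ≤ T.sup m → i₀ ≤ j)
    (hmax : ∀ l ∉ F,
      ¬∀ T ⊆ insert l F, T.Nonempty → ∃ i₀ ∈ T, ∀ j, m j ≤ T.sup m → i₀ ≤ j)
    (hlcm : ∀ j ∈ F, (F.erase j).sup m ≠ F.sup m) :
    bettiOfTaylor k s (fun σ => σ.sup m ≤ F.sup m ∧ σ.sup m ≠ F.sup m) F.card ≠ 0 := by
  simp only [← lt_iff_le_and_ne]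
  have hP : IsLowerSet {σ : Finset (Fin s) | σ.sup m < F.sup m} :=
    fun _ _ hba ha => (Finset.sup_mono (f := m) hba).trans_lt ha
  have hfacets : ∀ v ∈ F, (F.erase v).sup m < F.sup m :=
    fun v hv => (Finset.sup_mono (F.erase_subset v)).lt_of_ne (hlcm v hv)
  obtain rfl | ⟨j₀, hj₀⟩ := F.eq_empty_or_nonempty
  · simp [bettiOfTaylor]
  obtain ⟨ρ, hρF, hρid, hρ⟩ := Lyubeznik.exists_retraction_of_isRooted hrooted hmax ⟨j₀, hj₀⟩
  obtain ⟨i, hi⟩ := Nat.exists_eq_add_one.mpr (Finset.card_pos.mpr ⟨j₀, hj₀⟩)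
  have hnoninj : ∀ σ : Finset (Fin s), σ.sup m < F.sup m → σ.card = i + 1 → ¬Set.InjOn ρ σ :=
    fun σ hσ hc => Lyubeznik.not_injOn_of_sup_lt hρF hρ hσ (hc.trans hi.symm)
  have hcard : (F.erase j₀).card + 1 = i + 1 := by rw [Finset.card_erase_of_mem hj₀, hi]; rfl
  rw [hi]
  rcases i with _ | i
  · refine Taylor.bettiOfTaylor_one_ne_zero _ ?_ fun σ hσ hc => hnoninj σ hσ hc
      fun a ha b hb _ => Finset.card_le_one.mp hc.le a ha b hb
    exact Finset.card_eq_zero.mp (Nat.succ_injective hcard) ▸ hfacets j₀ hj₀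
  · refine Taylor.bettiOfTaylor_ne_zero_of_coboundary_ne_zero _ hP hi hfacets
      (fun σ hσ hc => Taylor.coboundary_incidenceDet (hc.trans hcard.symm) (hnoninj σ hσ hc)) ?_
    rw [Taylor.coboundary_incidenceDet_erase hj₀ hρid]
    exact pow_ne_zero _ (neg_ne_zero.mpr one_ne_zero)

/-- Barile's criterion.  Let `I` be a monomial ideal of `S = k[x_1, ..., x_n]` whose
minimal generators are the monomials with exponent vectors `m 0, ..., m (s-1)`, totally
ordered by the index order (so `m` is an antichain under divisibility).  Suppose the set
`F` of generators is a facet of the Lyubeznik simplicial complex, i.e. `F` is rooted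
(for every nonempty `T ⊆ F`, the least-index generator dividing `lcm(T)` lies in `T`)
and no strictly larger set is rooted, and that omitting any generator of `F` strictly
decreases the lcm.  Then the multigraded Betti number `b_{|F|, q}(S/I)` is nonzero,
where `q = lcm(F)` (lcms of exponent vectors are pointwise suprema). -/
theorem lyubeznik_facet_gives_nonzero_betti (k : Type) [Field k] (n s : ℕ)
    (m : Fin s → (Fin n → ℕ)) (hmin : ∀ i j, m i ≤ m j → i = j)
    (F : Finset (Fin s))
    (hrooted : ∀ T ⊆ F, T.Nonempty → ∃ i₀ ∈ T, ∀ j, m j ≤ T.sup m → i₀ ≤ j)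
    (hmax : ∀ l ∉ F,
      ¬∀ T ⊆ insert l F, T.Nonempty → ∃ i₀ ∈ T, ∀ j, m j ≤ T.sup m → i₀ ≤ j)
    (hlcm : ∀ j ∈ F, (F.erase j).sup m ≠ F.sup m) :
    bettiOfTaylor k s (fun σ => σ.sup m ≤ F.sup m ∧ σ.sup m ≠ F.sup m) F.card ≠ 0 :=
  lyubeznik_facet_gives_nonzero_betti_general k n s m F hrooted hmax hlcm
end

section
/- Let Γ be a simplicial complex, < a total order on its facets, and S a nonempty set of facets such that for every nonempty subset T ⊆ S, the union of facets omitting any one element of T is strictly smaller than the union over T. Then for every nonempty T ⊆ S, the <-smallest facet of Γ contained in ∪_{F∈T} F that belongs to S is the <-smallest element of T, provided the elements of S are ordered before all other facets; in particular S is rooted, i.e., a face of the Lyubeznik complex Λ_{F(Γ),<}. -/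
open Classical

variable {α : Type*} [DecidableEq α]

/-! If a facet `G ⊆ ⋃ T` came before the `w`-smallest element `G₀` of `T`, then `G` would lie in
`S`, since the facets of `S` come first, and not in `T`; so `insert G T ⊆ S` would have the same
union as `T`, and erasing `G` from it would not shrink the union. -/

theorem mem_of_le_sup_of_sup_erase_lt {β : Type*} [DecidableEq β] [SemilatticeSup β]
    [OrderBot β] {S T : Finset β}
    (hstrict : ∀ T ⊆ S, T.Nonempty → ∀ F ∈ T, (T.erase F).sup id < T.sup id)
    (hTS : T ⊆ S) {G : β} (hGS : G ∈ S) (hGT : G ≤ T.sup id) : G ∈ T := by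
  by_contra hG
  have hsup : (insert G T).sup id = T.sup id := by
    rw [Finset.sup_insert]
    exact sup_eq_right.mpr hGT
  have := hstrict (insert G T) (Finset.insert_subset hGS hTS) (Finset.insert_nonempty G T) G
    (Finset.mem_insert_self G T)
  rw [Finset.erase_insert hG, hsup] at this
  exact this.false

theorem minimal_unions_give_rooted_general (Γ : Finset (Finset α))
    (S : Finset (Finset α))
    (hstrict : ∀ T ⊆ S, T.Nonempty → ∀ F ∈ T, (T.erase F).sup id ⊂ T.sup id)
    (w : Finset α → ℕ)
    (hfirst : ∀ F ∈ S, ∀ H ∈ Γ, H ∉ S → w F < w H) :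
    (∀ T ⊆ S, T.Nonempty → ∃ G₀ ∈ T, (∀ H ∈ T, w G₀ ≤ w H) ∧
      ∀ G ∈ Γ, G ⊆ T.sup id → w G₀ ≤ w G) ∧
    Rooted w Γ S := by
  have key : ∀ T ⊆ S, T.Nonempty → ∃ G₀ ∈ T, (∀ H ∈ T, w G₀ ≤ w H) ∧
      ∀ G ∈ Γ, G ⊆ T.sup id → w G₀ ≤ w G := by
    intro T hTS hTne
    obtain ⟨G₀, hG₀T, hmin⟩ := T.exists_min_image w hTne
    refine ⟨G₀, hG₀T, hmin, fun G hGΓ hGT => ?_⟩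
    by_cases hGS : G ∈ S
    · exact hmin G (mem_of_le_sup_of_sup_erase_lt hstrict hTS hGS hGT)
    · exact (hfirst G₀ (hTS hG₀T) G hGΓ hGS).le
  exact ⟨key, fun T hTS hTne =>
    let ⟨G₀, hG₀T, _, hG₀⟩ := key T hTS hTne
    ⟨G₀, hG₀T, hG₀⟩⟩

/-- Let `Γ` be a simplicial complex, `<` a total order on its facets (encoded by an
injective weight function `w`), and `S` a nonempty set of facets such that for every
nonempty `T ⊆ S` omitting any one element of `T` strictly decreases the union.  If the
elements of `S` come before all the other facets in the order, then for every nonempty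
`T ⊆ S` the `<`-smallest facet of `Γ` contained in `⋃_{F ∈ T} F` is the `<`-smallest
element of `T`; in particular `S` is rooted, i.e. a face of the Lyubeznik complex. -/
theorem minimal_unions_give_rooted (Γ : Finset (Finset α))
    (hfacets : ∀ F ∈ Γ, ∀ G ∈ Γ, F ⊆ G → F = G)
    (S : Finset (Finset α)) (hSΓ : S ⊆ Γ) (hSne : S.Nonempty)
    (hstrict : ∀ T ⊆ S, T.Nonempty → ∀ F ∈ T, (T.erase F).sup id ⊂ T.sup id)
    (w : Finset α → ℕ) (hinj : Set.InjOn w Γ)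
    (hfirst : ∀ F ∈ S, ∀ H ∈ Γ, H ∉ S → w F < w H) :
    (∀ T ⊆ S, T.Nonempty → ∃ G₀ ∈ T, (∀ H ∈ T, w G₀ ≤ w H) ∧
      ∀ G ∈ Γ, G ⊆ T.sup id → w G₀ ≤ w G) ∧
    Rooted w Γ S :=
  minimal_unions_give_rooted_general Γ S hstrict w hfirst
end
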